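/- arXiv:0708.1273 — 6 statements merged into one kernel-verified Lean document; each statement's English description precedes it below -/
import Mathlib

section
/- For integers x, y ≥ 0 and 0 ≤ a < a+x+y < b ≤ n, the composite σ_{a,b} ∘ σ_{a+x,b-y} ∘ σ_{a,b} ∘ σ_{a+y,b-x} is the identity permutation of {1,…,n}. -/
def sigmaMap (a b x : ℤ) : ℤ := if a + 1 ≤ x ∧ x ≤ b then a + b + 1 - x else x

/-
Each σ_{a,b} is an involution, and for x, y ≥ 0 the window [a+x+1, b-y] lies inside [a+1, b], so
conjugating σ_{a+x,b-y} by the reflection σ_{a,b} reverses the mirrored window [a+y+1, b-x]: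
σ_{a,b} σ_{a+x,b-y} σ_{a,b} = σ_{a+y,b-x}. The composite is therefore σ_{a+y,b-x}² = id.
-/

theorem sigmaMap_involutive (a b : ℤ) : Function.Involutive (sigmaMap a b) := by
  intro w
  unfold sigmaMap
  split_ifs <;> omega

theorem sigmaMap_conj_sigmaMap {a b x y : ℤ} (hx : 0 ≤ x) (hy : 0 ≤ y) (w : ℤ) :
    sigmaMap a b (sigmaMap (a + x) (b - y) (sigmaMap a b w)) = sigmaMap (a + y) (b - x) w := by
  unfold sigmaMap
  split_ifs <;> omega

theorem stmt_2_general (n a b x y : ℤ) (hx : 0 ≤ x) (hy : 0 ≤ y) :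
    ∀ w ∈ Set.Icc (1 : ℤ) n,
      sigmaMap a b (sigmaMap (a + x) (b - y) (sigmaMap a b (sigmaMap (a + y) (b - x) w))) = w := by
  intro w _
  rw [sigmaMap_conj_sigmaMap hx hy, sigmaMap_involutive]

theorem stmt_2 (n a b x y : ℤ) (hx : 0 ≤ x) (hy : 0 ≤ y) (h0 : 0 ≤ a)
    (h1 : a < a + x + y) (h2 : a + x + y < b) (hbn : b ≤ n) :
    ∀ w ∈ Set.Icc (1 : ℤ) n,
      sigmaMap a b (sigmaMap (a + x) (b - y) (sigmaMap a b (sigmaMap (a + y) (b - x) w))) = w :=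
  stmt_2_general n a b x y hx hy
end

section
/- For integers x, y, z > 0 and 0 ≤ a with b = a+x+y+z ≤ n, the composite σ_{a,b-z} ∘ σ_{a+y,b} ∘ σ_{a,b-x} ∘ σ_{a+z,b} ∘ σ_{a,b-y} ∘ σ_{a+x,b} is the identity permutation of {1,…,n}. -/
/-!
Split the window `{a+1, …, b}` into consecutive blocks `X, Y, Z` of lengths `x, y, z`.
The pair `σ_{a,b-y} ∘ σ_{a+x,b}` turns the arrangement `X Y Z` into `Z X̄ Ȳ`, where a bar
marks a reversed block. The three pairs of the composite therefore act as
`X Y Z ↦ Z X̄ Ȳ ↦ Ȳ Z̄ X ↦ X Y Z`.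
-/

def sigmaPair (a b x y w : ℤ) : ℤ := sigmaMap a (b - y) (sigmaMap (a + x) b w)

section

variable {a b x y z w : ℤ}

lemma sigmaMap_of_mem (h₁ : a < w) (h₂ : w ≤ b) : sigmaMap a b w = a + b + 1 - w :=
  if_pos ⟨h₁, h₂⟩

lemma sigmaMap_of_not_mem (h : w ≤ a ∨ b < w) : sigmaMap a b w = w :=
  if_neg (by omega)

lemma sigmaPair_of_not_mem (hx : 0 ≤ x) (hy : 0 ≤ y) (h : w ≤ a ∨ b < w) :
    sigmaPair a b x y w = w := by
  rw [sigmaPair, sigmaMap_of_not_mem (a := a + x) (w := w) (by omega),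
    sigmaMap_of_not_mem (by omega)]

lemma sigmaPair_of_mem_left (hz : 0 ≤ z) (hb : b = a + x + y + z) (h₁ : a < w)
    (h₂ : w ≤ a + x) : sigmaPair a b x y w = a + b - y + 1 - w := by
  rw [sigmaPair, sigmaMap_of_not_mem (a := a + x) (w := w) (by omega),
    sigmaMap_of_mem h₁ (by omega)]
  ring

lemma sigmaPair_of_mem_middle (hz : 0 ≤ z) (hb : b = a + x + y + z) (h₁ : a + x < w)
    (h₂ : w ≤ a + x + y) : sigmaPair a b x y w = a + x + b + 1 - w := by
  rw [sigmaPair, sigmaMap_of_mem h₁ (by omega), sigmaMap_of_not_mem (by omega)]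

lemma sigmaPair_of_mem_right (hx : 0 ≤ x) (hy : 0 ≤ y) (hb : b = a + x + y + z) (h₁ : a + x + y < w)
    (h₂ : w ≤ b) : sigmaPair a b x y w = w - x - y := by
  rw [sigmaPair, sigmaMap_of_mem (a := a + x) (by omega) h₂,
    sigmaMap_of_mem (by omega) (by omega)]
  ring

end

theorem stmt_3_general (n a b x y z : ℤ) (hx : 0 < x) (hy : 0 < y) (hz : 0 < z)
    (hb : b = a + x + y + z) :
    ∀ w ∈ Set.Icc (1 : ℤ) n,
      sigmaMap a (b - z) (sigmaMap (a + y) b (sigmaMap a (b - x)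
        (sigmaMap (a + z) b (sigmaMap a (b - y) (sigmaMap (a + x) b w))))) = w := by
  intro w _
  change sigmaPair a b y z (sigmaPair a b z x (sigmaPair a b x y w)) = w
  have hb₁ : b = a + z + x + y := by omega
  have hb₂ : b = a + y + z + x := by omega
  by_cases hout : w ≤ a ∨ b < w
  · rw [sigmaPair_of_not_mem hx.le hy.le hout, sigmaPair_of_not_mem hz.le hx.le hout,
      sigmaPair_of_not_mem hy.le hz.le hout]
  rcases le_or_gt w (a + x) with hX | hX
  · rw [sigmaPair_of_mem_left hz.le hb (by omega) hX,
      sigmaPair_of_mem_middle hy.le hb₁ (by omega) (by omega),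
      sigmaPair_of_mem_right hy.le hz.le hb₂ (by omega) (by omega)]
    omega
  rcases le_or_gt w (a + x + y) with hY | hY
  · rw [sigmaPair_of_mem_middle hz.le hb hX hY,
      sigmaPair_of_mem_right hz.le hx.le hb₁ (by omega) (by omega),
      sigmaPair_of_mem_left hx.le hb₂ (by omega) (by omega)]
    omega
  · rw [sigmaPair_of_mem_right hx.le hy.le hb hY (by omega),
      sigmaPair_of_mem_left hy.le hb₁ (by omega) (by omega),
      sigmaPair_of_mem_middle hx.le hb₂ (by omega) (by omega)]
    omega

theorem stmt_3 (n a b x y z : ℤ) (hx : 0 < x) (hy : 0 < y) (hz : 0 < z) (h0 : 0 ≤ a)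
    (hb : b = a + x + y + z) (hbn : b ≤ n) :
    ∀ w ∈ Set.Icc (1 : ℤ) n,
      sigmaMap a (b - z) (sigmaMap (a + y) b (sigmaMap a (b - x)
        (sigmaMap (a + z) b (sigmaMap a (b - y) (sigmaMap (a + x) b w))))) = w :=
  stmt_3_general n a b x y z hx hy hz hb
end

section
/- For real numbers n₁,…,n₆, the product M(n₁)·M(n₂)·M(n₃)·M(n₄)·M(n₅)·M(n₆) is the identity matrix if and only if there exists a real number k such that (n₄,n₅,n₆) = (n₁+k, n₂−k, n₃+k); equivalently, if and only if (−1)^i (n_i − n_{i+3}) is independent of i ∈ {1,2,3}. -/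
/-! Write `M x` in block form `[[R, 0], [(0, x), 1]]` with `R = [[0, -1], [1, 1]]`, a rotation of
order six with `R ^ 3 = -1`. A product of three consecutive factors is therefore
`[[-1, 0], [(a + b, b + c), 1]]`, and two such blocks multiply to `[[1, 0], [v - u, 1]]`:
the product of six factors is the identity exactly when the bottom rows of the two halves agree,
i.e. when `n₁ + n₂ = n₄ + n₅` and `n₂ + n₃ = n₅ + n₆`. -/

def M (x : ℝ) : Matrix (Fin 3) (Fin 3) ℝ := !![0, -1, 0; 1, 1, 0; 0, x, 1]

theorem M_mul_M_mul_M (a b c : ℝ) :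
    M a * M b * M c = !![-1, 0, 0; 0, -1, 0; a + b, b + c, 1] := by
  simp [M]
  ring

theorem M_mul_six (n₁ n₂ n₃ n₄ n₅ n₆ : ℝ) :
    M n₁ * M n₂ * M n₃ * M n₄ * M n₅ * M n₆ =
      !![1, 0, 0; 0, 1, 0; n₄ + n₅ - (n₁ + n₂), n₅ + n₆ - (n₂ + n₃), 1] := by
  calc M n₁ * M n₂ * M n₃ * M n₄ * M n₅ * M n₆
      = (M n₁ * M n₂ * M n₃) * (M n₄ * M n₅ * M n₆) := by simp only [mul_assoc]
    _ = _ := by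
      rw [M_mul_M_mul_M, M_mul_M_mul_M]
      simp
      constructor <;> ring

theorem Matrix.lowerUnitriangular_fin_three_eq_one_iff {R : Type*} [Zero R] [One R] (x y : R) :
    !![1, 0, 0; 0, 1, 0; x, y, 1] = (1 : Matrix (Fin 3) (Fin 3) R) ↔ x = 0 ∧ y = 0 := by
  simp [Matrix.one_fin_three]

theorem exists_shift_iff {G : Type*} [AddCommGroup G] (n₁ n₂ n₃ n₄ n₅ n₆ : G) :
    (∃ k, n₄ = n₁ + k ∧ n₅ = n₂ - k ∧ n₆ = n₃ + k) ↔
      n₄ + n₅ - (n₁ + n₂) = 0 ∧ n₅ + n₆ - (n₂ + n₃) = 0 := by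
  constructor
  · rintro ⟨k, rfl, rfl, rfl⟩
    constructor <;> abel
  · rintro ⟨h₁, h₂⟩
    refine ⟨n₄ - n₁, by abel, ?_, ?_⟩
    · linear_combination (norm := abel) h₁
    · linear_combination (norm := abel) h₂ - h₁

theorem stmt_7 (n₁ n₂ n₃ n₄ n₅ n₆ : ℝ) :
    (M n₁ * M n₂ * M n₃ * M n₄ * M n₅ * M n₆ = 1 ↔
      ∃ k : ℝ, n₄ = n₁ + k ∧ n₅ = n₂ - k ∧ n₆ = n₃ + k) ∧
    ((∃ k : ℝ, n₄ = n₁ + k ∧ n₅ = n₂ - k ∧ n₆ = n₃ + k) ↔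
      (-(n₁ - n₄) = n₂ - n₅ ∧ n₂ - n₅ = -(n₃ - n₆))) := by
  rw [exists_shift_iff]
  refine ⟨by rw [M_mul_six, Matrix.lowerUnitriangular_fin_three_eq_one_iff], ?_⟩
  constructor <;> rintro ⟨h₁, h₂⟩ <;> constructor <;> linarith
end

section
/- For real numbers n₁, n₂, n₃, n₄, the product L(n₁)·L(n₂)·L(n₃)·L(n₄) is the identity matrix if and only if n₃ = n₁ and n₄ = n₂. -/
/-
`L x` acts on the first two coordinates as the rotation by a quarter turn, so a product of four
of them is unipotent: `L a * L b` is the half turn with bottom row `(a, b, 1)`, and two half turns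
compose to the shear with bottom row `(c - a, d - b, 1)`.
-/

def L (x : ℝ) : Matrix (Fin 3) (Fin 3) ℝ := !![0, -1, 0; 1, 0, 0; 0, x, 1]

theorem L_mul_L (a b : ℝ) : L a * L b = !![-1, 0, 0; 0, -1, 0; a, b, 1] := by
  ext i j
  fin_cases i <;> fin_cases j <;> simp [L, Matrix.mul_apply, Fin.sum_univ_three]

theorem halfTurn_mul_halfTurn (a b c d : ℝ) :
    !![-1, 0, 0; 0, -1, 0; a, b, 1] * !![-1, 0, 0; 0, -1, 0; c, d, 1] =
      (!![1, 0, 0; 0, 1, 0; c - a, d - b, 1] : Matrix (Fin 3) (Fin 3) ℝ) := by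
  ext i j
  fin_cases i <;> fin_cases j <;> simp [Matrix.mul_apply, Fin.sum_univ_three] <;> ring

theorem shear_eq_one_iff (p q : ℝ) :
    (!![1, 0, 0; 0, 1, 0; p, q, 1] : Matrix (Fin 3) (Fin 3) ℝ) = 1 ↔ p = 0 ∧ q = 0 := by
  rw [← Matrix.ext_iff]
  constructor
  · intro h
    exact ⟨by simpa using h 2 0, by simpa using h 2 1⟩
  · rintro ⟨rfl, rfl⟩ i j
    fin_cases i <;> fin_cases j <;> simp

theorem stmt_9 (n₁ n₂ n₃ n₄ : ℝ) :
    L n₁ * L n₂ * L n₃ * L n₄ = 1 ↔ n₃ = n₁ ∧ n₄ = n₂ := by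
  rw [mul_assoc, L_mul_L, L_mul_L, halfTurn_mul_halfTurn, shear_eq_one_iff, sub_eq_zero,
    sub_eq_zero]
end

section
/- There are exactly 15 cyclic sequences (n₁,…,n₆) with entries in {0,1,2}, counted up to cyclic permutation and reversal, such that (−1)^i(n_i − n_{i+3}) (indices mod 6) is independent of i; explicitly these are (0,0,0,0,0,0), (0,0,1,0,0,1), (0,1,0,1,0,1), (0,1,1,0,1,1), (1,1,1,1,1,1), (0,0,2,0,0,2), (0,2,0,2,0,2), (0,2,2,0,2,2), (1,1,2,1,1,2), (1,2,1,2,1,2), (1,2,2,1,2,2), (2,2,2,2,2,2), (1,1,1,0,2,0), (1,1,1,2,0,2), (0,1,2,0,1,2). -/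
/-- A cyclic sequence of length 6 with entries in `{0,1,2}` such that
`(-1)^i (n_i - n_{i+3})` is independent of `i` (indices mod 6). -/
def goodSeq (f : Fin 6 → ℤ) : Prop :=
  (∀ i, f i = 0 ∨ f i = 1 ∨ f i = 2) ∧
  ∃ c : ℤ, ∀ i : Fin 6, (-1 : ℤ) ^ (i : ℕ) * (f i - f (i + 3)) = c

/-- Two cyclic sequences are identified if they differ by a cyclic shift or a reversal
(composition with `i ↦ -i`) followed by a shift. -/
def cyclicEquiv (f g : Fin 6 → ℤ) : Prop :=
  ∃ k : Fin 6, (∀ i, g i = f (i + k)) ∨ (∀ i, g i = f (k - i))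

def repList : List (Fin 6 → ℤ) :=
  [![0,0,0,0,0,0], ![0,0,1,0,0,1], ![0,1,0,1,0,1], ![0,1,1,0,1,1],
   ![1,1,1,1,1,1], ![0,0,2,0,0,2], ![0,2,0,2,0,2], ![0,2,2,0,2,2],
   ![1,1,2,1,1,2], ![1,2,1,2,1,2], ![1,2,2,1,2,2], ![2,2,2,2,2,2],
   ![1,1,1,0,2,0], ![1,1,1,2,0,2], ![0,1,2,0,1,2]]

/-! Everything is a finite check: a sequence with entries in `{0,1,2}` is the image of a map
`Fin 6 → Fin 3`, so completeness of the list is decided over the `3 ^ 6` such maps. -/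

lemma exists_finThree_eq_cast {ι : Type*} {f : ι → ℤ}
    (hf : ∀ i, f i = 0 ∨ f i = 1 ∨ f i = 2) : ∃ F : ι → Fin 3, f = fun i => ((F i : ℕ) : ℤ) := by
  refine ⟨fun i => ⟨(f i).toNat, by rcases hf i with h | h | h <;> simp [h]⟩, funext fun i => ?_⟩
  rcases hf i with h | h | h <;> simp [h]

lemma goodSeq_iff {f : Fin 6 → ℤ} :
    goodSeq f ↔ (∀ i, f i = 0 ∨ f i = 1 ∨ f i = 2) ∧
      ∀ i : Fin 6, (-1 : ℤ) ^ (i : ℕ) * (f i - f (i + 3)) = f 0 - f 3 := by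
  refine and_congr_right fun _ => ⟨fun ⟨c, hc⟩ i => ?_, fun h => ⟨_, h⟩⟩
  rw [hc i, ← hc 0]
  simp

lemma goodSeq_of_mem_repList : ∀ f ∈ repList, goodSeq f := by
  simp only [goodSeq_iff]
  decide

set_option maxRecDepth 100000 in
lemma exists_mem_repList_cyclicEquiv_finThree : ∀ F : Fin 6 → Fin 3,
    (∀ i : Fin 6, (-1 : ℤ) ^ (i : ℕ) * ((F i : ℤ) - F (i + 3)) = (F 0 : ℤ) - F 3) →
    ∃ g ∈ repList, cyclicEquiv (fun i => (F i : ℤ)) g := by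
  unfold cyclicEquiv
  decide

lemma exists_mem_repList_cyclicEquiv {f : Fin 6 → ℤ} (hf : goodSeq f) :
    ∃ g ∈ repList, cyclicEquiv f g := by
  obtain ⟨hval, hdiff⟩ := goodSeq_iff.1 hf
  obtain ⟨F, rfl⟩ := exists_finThree_eq_cast hval
  exact exists_mem_repList_cyclicEquiv_finThree F hdiff

lemma repList_pairwise_not_cyclicEquiv : repList.Pairwise fun f g => ¬ cyclicEquiv f g := by
  unfold cyclicEquiv
  decide

theorem stmt_10 :
    repList.length = 15 ∧
    (∀ f ∈ repList, goodSeq f) ∧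
    (∀ f, goodSeq f → ∃ g ∈ repList, cyclicEquiv f g) ∧
    repList.Pairwise fun f g => ¬ cyclicEquiv f g :=
  ⟨rfl, goodSeq_of_mem_repList, fun _ => exists_mem_repList_cyclicEquiv,
    repList_pairwise_not_cyclicEquiv⟩
end

section
/- Let g be a word of length 2p (p ∈ {2,3}) and define vertices u_i by alternately applying s and t as in the structure of a 2-residue; if h is the alternating word of length 2pq then h = g^q, and u_0 = u_{2pq} if and only if a * g^q = a for every a in the image of u_0. -/
/-
Writing `x_j` for the `j`-th letter of the alternating word (`u_j(s)` for even `j`, `u_j(t)`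
for odd `j`), one step of the walk gives `u_{j+1}(r) = u_j(r) * x_j`, hence
`u_m(r) = u₀(r) * x_0 ⋯ x_{m-1}` and the recurrence `x_{j+2} = x_j * x_{j+1}`. Every cyclic
rotation of a relator is again a relator, and in a relator `a b c ⋯` we have `a * b = c`, so `g`
satisfies the same recurrence cyclically; as `x_0 x_1` is the start of `g`, the letters of `h`
run through `g` periodically and `h = g^q`.

That `a * b = c` is well defined is a finite check: rotating a base relator by two gives a base
relator with permuted parameters, so every relator is a base relator or its rotation by one, and
on these explicit words the third letter is determined by the first two by linear arithmetic.
-/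

/-- The generating set `T_n`: pairs `(a,b)` with `0 ≤ a < b ≤ n`. -/
def TGen (n : ℕ) := {p : ℕ × ℕ // p.1 < p.2 ∧ p.2 ≤ n}

namespace TGen

/-- The generator `t(a,b)`. -/
def t {n : ℕ} (a b : ℕ) (h : a < b ∧ b ≤ n) : TGen n := ⟨(a, b), h⟩

/-- The basic relator words defining `Q_n`. -/
def base (n : ℕ) : Set (List (TGen n)) :=
  {w | ∃ a b c d : ℕ, ∃ h : a < b ∧ b ≤ c ∧ c < d ∧ d ≤ n,
      w = [t a b ⟨h.1, by omega⟩, t c d ⟨h.2.2.1, h.2.2.2⟩,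
           t a b ⟨h.1, by omega⟩, t c d ⟨h.2.2.1, h.2.2.2⟩]} ∪
  {w | ∃ a b x y : ℕ, ∃ h : a < a + x + y ∧ a + x + y < b ∧ b ≤ n,
      w = [t a b ⟨by omega, h.2.2⟩, t (a + x) (b - y) ⟨by omega, by omega⟩,
           t a b ⟨by omega, h.2.2⟩, t (a + y) (b - x) ⟨by omega, by omega⟩]} ∪
  {w | ∃ a b x y z : ℕ, ∃ h : 0 < x ∧ 0 < y ∧ 0 < z ∧ b = a + x + y + z ∧ b ≤ n,
      w = [t a (b - z) ⟨by omega, by omega⟩, t (a + y) b ⟨by omega, h.2.2.2.2⟩,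
           t a (b - x) ⟨by omega, by omega⟩, t (a + z) b ⟨by omega, h.2.2.2.2⟩,
           t a (b - y) ⟨by omega, by omega⟩, t (a + x) b ⟨by omega, h.2.2.2.2⟩]}

/-- `Q_n`: the closure of the basic relator words under cyclic permutations. -/
def Qset (n : ℕ) : Set (List (TGen n)) :=
  {w | ∃ u v : List (TGen n), w = v ++ u ∧ u ++ v ∈ base n}

open Classical in
/-- The action `*` of the paper: `a * a = a`, and for `a ≠ b`, `a * b` is the (unique) `c` such
that some word in `a b c F_{T_n}` lies in `Q_n`. -/
noncomputable def star {n : ℕ} (a b : TGen n) : TGen n :=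
  if a = b then a
  else if h : ∃ c : TGen n, ∃ rest : List (TGen n), (a :: b :: c :: rest) ∈ Qset n then
    h.choose
  else a

/-- The action of a word: `a * (b₁ ⋯ b_m) = (⋯((a * b₁) * b₂)⋯) * b_m`. -/
noncomputable def starW {n : ℕ} (a : TGen n) (l : List (TGen n)) : TGen n :=
  l.foldl star a

/-- The `▽`-action of a single colour: `[u ▽ s](s) = u(s)` and `[u ▽ s](r) = u(r) * u(s)`
for `r ≠ s`. -/
noncomputable def nabla {n : ℕ} {I : Type*} [DecidableEq I]
    (u : I → TGen n) (s : I) : I → TGen n :=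
  fun r => if r = s then u s else star (u r) (u s)

/-- The sequence `u_0, u_1, u_2, …` with `u_{2i+1} ▽ s = u_{2i} = u_{2i-1} ▽ t`, i.e.
obtained from `u₀` by alternately applying `▽s` and `▽t`. -/
noncomputable def seq {n : ℕ} {I : Type*} [DecidableEq I]
    (u₀ : I → TGen n) (s t : I) : ℕ → (I → TGen n)
  | 0 => u₀
  | k + 1 => nabla (seq u₀ s t k) (if Even k then s else t)

/-- The alternating word `h = u₀(s) u₁(t) u₂(s) u₃(t) ⋯ u_{2k-2}(s) u_{2k-1}(t)`. -/
noncomputable def hword {n : ℕ} {I : Type*} [DecidableEq I]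
    (u₀ : I → TGen n) (s t : I) (k : ℕ) : List (TGen n) :=
  (List.range (2 * k)).map fun j => seq u₀ s t j (if Even j then s else t)

end TGen

theorem List.map_range_mul_eq_flatten_replicate {α : Type*} {f : ℕ → α} {g : List α}
    (hper : Function.Periodic f g.length) (hg : (List.range g.length).map f = g) (q : ℕ) :
    (List.range (q * g.length)).map f = (List.replicate q g).flatten := by
  induction q with
  | zero => simp
  | succ q ih =>
    have hshift : (fun i => f (q * g.length + i)) = f :=
      funext fun i => by rw [add_comm]; exact hper.nat_mul q i
    rw [Nat.succ_mul, List.range_add, List.map_append, ih, List.map_map, Function.comp_def,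
      hshift, hg, List.replicate_succ', List.flatten_append, List.flatten_singleton]

namespace TGen

variable {n : ℕ}

lemma t_eq_t_iff {a b c d : ℕ} {h : a < b ∧ b ≤ n} {h' : c < d ∧ d ≤ n} :
    t a b h = t c d h' ↔ a = c ∧ b = d :=
  Subtype.mk_eq_mk.trans Prod.mk_inj

lemma rotate_two_mem_base {w : List (TGen n)} (hw : w ∈ base n) : w.rotate 2 ∈ base n := by
  rcases hw with (⟨a, b, c, d, h, rfl⟩ | ⟨a, b, x, y, h, rfl⟩) | ⟨a, b, x, y, z, h, rfl⟩
  · exact Or.inl (Or.inl ⟨a, b, c, d, h, rfl⟩)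
  · exact Or.inl (Or.inr ⟨a, b, y, x, by omega, rfl⟩)
  · exact Or.inr ⟨a, b, y, z, x, by omega, rfl⟩

lemma mem_Qset_iff {w : List (TGen n)} : w ∈ Qset n ↔ ∃ b ∈ base n, ∃ k, w = b.rotate k := by
  constructor
  · rintro ⟨u, v, rfl, hb⟩
    exact ⟨u ++ v, hb, u.length, (List.rotate_append_length_eq u v).symm⟩
  · rintro ⟨b, hb, k, rfl⟩
    refine ⟨b.take (k % b.length), b.drop (k % b.length), List.rotate_eq_drop_append_take_mod, ?_⟩
    rwa [List.take_append_drop]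

lemma exists_mem_base_eq_or_eq_rotate_one {w : List (TGen n)} (hw : w ∈ Qset n) :
    ∃ b ∈ base n, w = b ∨ w = b.rotate 1 := by
  obtain ⟨b, hb, k, rfl⟩ := mem_Qset_iff.mp hw
  clear hw
  induction k using Nat.strong_induction_on generalizing b with
  | _ k ih =>
    match k with
    | 0 => exact ⟨b, hb, Or.inl b.rotate_zero⟩
    | 1 => exact ⟨b, hb, Or.inr rfl⟩
    | k + 2 =>
      rw [add_comm, ← List.rotate_rotate]
      exact ih k (by omega) _ (rotate_two_mem_base hb)

lemma ne_of_cons_cons_mem_Qset {a b : TGen n} {r : List (TGen n)}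
    (hw : a :: b :: r ∈ Qset n) : a ≠ b := by
  obtain ⟨w, hw, he | he⟩ := exists_mem_base_eq_or_eq_rotate_one hw <;>
  rcases hw with (⟨_, _, _, _, h, rfl⟩ | ⟨_, _, _, _, h, rfl⟩) | ⟨_, _, _, _, _, h, rfl⟩ <;>
  · simp only [List.rotate_cons_succ, List.rotate_zero, List.cons_append, List.nil_append,
      List.cons.injEq] at he
    obtain ⟨rfl, rfl, -⟩ := he
    rw [ne_eq, t_eq_t_iff]
    omega

lemma eq_of_cons_cons_cons_mem_Qset {a b c c' : TGen n} {r r' : List (TGen n)}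
    (hw : a :: b :: c :: r ∈ Qset n) (hw' : a :: b :: c' :: r' ∈ Qset n) : c = c' := by
  obtain ⟨w, hw, he | he⟩ := exists_mem_base_eq_or_eq_rotate_one hw <;>
  obtain ⟨w', hw', he' | he'⟩ := exists_mem_base_eq_or_eq_rotate_one hw' <;>
  rcases hw with (⟨_, _, _, _, h, rfl⟩ | ⟨_, _, _, _, h, rfl⟩) | ⟨_, _, _, _, _, h, rfl⟩ <;>
  rcases hw' with (⟨_, _, _, _, h', rfl⟩ | ⟨_, _, _, _, h', rfl⟩) | ⟨_, _, _, _, _, h', rfl⟩ <;>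
  · simp only [List.rotate_cons_succ, List.rotate_zero, List.cons_append, List.nil_append,
      List.cons.injEq] at he he'
    obtain ⟨rfl, rfl, rfl, -⟩ := he
    obtain ⟨ha, hb, rfl, -⟩ := he'
    rw [t_eq_t_iff] at ha hb ⊢
    omega

lemma length_of_mem_Qset {w : List (TGen n)} (hw : w ∈ Qset n) :
    w.length = 4 ∨ w.length = 6 := by
  obtain ⟨b, hb, k, rfl⟩ := mem_Qset_iff.mp hw
  rw [List.length_rotate]
  rcases hb with (⟨_, _, _, _, _, rfl⟩ | ⟨_, _, _, _, _, rfl⟩) | ⟨_, _, _, _, _, _, rfl⟩ <;> simp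

lemma rotate_mem_Qset {w : List (TGen n)} (hw : w ∈ Qset n) (k : ℕ) : w.rotate k ∈ Qset n := by
  obtain ⟨b, hb, m, rfl⟩ := mem_Qset_iff.mp hw
  exact mem_Qset_iff.mpr ⟨b, hb, m + k, List.rotate_rotate b m k⟩

lemma star_self (a : TGen n) : star a a = a := if_pos rfl

lemma star_eq_of_mem_Qset {a b c : TGen n} {r : List (TGen n)}
    (hw : a :: b :: c :: r ∈ Qset n) : star a b = c := by
  have hex : ∃ c r, a :: b :: c :: r ∈ Qset n := ⟨c, r, hw⟩
  rw [star, if_neg (ne_of_cons_cons_mem_Qset hw), dif_pos hex]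
  exact eq_of_cons_cons_cons_mem_Qset hex.choose_spec.choose_spec hw

lemma star_getElem_mod {g : List (TGen n)} (hg : g ∈ Qset n) (hL : 0 < g.length) (j : ℕ) :
    star (g[j % g.length]'(Nat.mod_lt _ hL)) (g[(j + 1) % g.length]'(Nat.mod_lt _ hL))
      = g[(j + 2) % g.length]'(Nat.mod_lt _ hL) := by
  have hrot := rotate_mem_Qset hg j
  have h3 : 3 ≤ (g.rotate j).length := by
    rw [List.length_rotate]; rcases length_of_mem_Qset hg with h | h <;> omega
  obtain ⟨x, y, z, r, he⟩ : ∃ x y z r, g.rotate j = x :: y :: z :: r := by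
    match g.rotate j, h3 with
    | x :: y :: z :: r, _ => exact ⟨x, y, z, r, rfl⟩
  have hx := List.getElem_rotate g j 0 (by omega)
  have hy := List.getElem_rotate g j 1 (by omega)
  have hz := List.getElem_rotate g j 2 (by omega)
  simp only [he, List.getElem_cons_zero, List.getElem_cons_succ, zero_add] at hx hy hz
  rw [add_comm j 1, add_comm j 2, ← hx, ← hy, ← hz]
  exact star_eq_of_mem_Qset (he ▸ hrot)

lemma periodic_and_map_range_eq_of_star_rec {f : ℕ → TGen n}
    (hf : ∀ j, f (j + 2) = star (f j) (f (j + 1))) {g : List (TGen n)} (hg : g ∈ Qset n)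
    (hstart : ∃ r, g = f 0 :: f 1 :: r) :
    Function.Periodic f g.length ∧ (List.range g.length).map f = g := by
  obtain ⟨r, hgr⟩ := hstart
  have hL : 1 < g.length := by rw [hgr]; simp
  have hmod : ∀ j, f j = g[j % g.length]'(Nat.mod_lt _ (by omega)) := by
    intro j
    induction j using Nat.strong_induction_on with
    | _ j ih =>
      match j with
      | 0 => simp [hgr]
      | 1 => simp [hgr]
      | j + 2 => rw [hf, ih j (by omega), ih (j + 1) (by omega), star_getElem_mod hg (by omega)]
  refine ⟨fun j => by simp only [hmod, Nat.add_mod_right], ?_⟩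
  refine List.ext_getElem (by simp) fun i hi _ => ?_
  simp only [List.getElem_map, List.getElem_range, hmod, Nat.mod_eq_of_lt (by simpa using hi)]

section Walk

variable {I : Type*} [DecidableEq I]

lemma nabla_apply (u : I → TGen n) (c r : I) : nabla u c r = star (u r) (u c) := by
  by_cases h : r = c
  · rw [nabla, if_pos h, h, star_self]
  · rw [nabla, if_neg h]

noncomputable def letter (u₀ : I → TGen n) (s t : I) (j : ℕ) : TGen n :=
  seq u₀ s t j (if Even j then s else t)

lemma hword_eq_map_letter (u₀ : I → TGen n) (s t : I) (k : ℕ) :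
    hword u₀ s t k = (List.range (2 * k)).map (letter u₀ s t) := rfl

lemma seq_apply (u₀ : I → TGen n) (s t : I) (m : ℕ) (r : I) :
    seq u₀ s t m r = starW (u₀ r) ((List.range m).map (letter u₀ s t)) := by
  induction m with
  | zero => rfl
  | succ m ih =>
    rw [seq, nabla_apply, ih]
    unfold starW
    rw [List.range_succ, List.map_append, List.foldl_append]
    rfl

lemma letter_add_two (u₀ : I → TGen n) (s t : I) (j : ℕ) :
    letter u₀ s t (j + 2) = star (letter u₀ s t j) (letter u₀ s t (j + 1)) := by
  have hcol : (if Even (j + 2) then s else t) = if Even j then s else t := by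
    simp only [Nat.even_add_one, not_not]
  rw [letter, hcol, seq, nabla_apply, seq, nabla, if_pos rfl]
  rfl

end Walk

end TGen

theorem stmt_18_general {n : ℕ} {I : Type*} [DecidableEq I]
    (u₀ : I → TGen n) (s t : I)
    (p : ℕ) (g : List (TGen n))
    (hgQ : g ∈ TGen.Qset n) (hglen : g.length = 2 * p)
    (hghead : ∃ rest : List (TGen n), g = u₀ s :: (TGen.seq u₀ s t 1) t :: rest)
    (q : ℕ) :
    TGen.hword u₀ s t (p * q) = (List.replicate q g).flatten ∧
    (∀ r : I, TGen.seq u₀ s t (2 * (p * q)) r =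
      TGen.starW (u₀ r) ((List.replicate q g).flatten)) ∧
    (TGen.seq u₀ s t (2 * (p * q)) = u₀ ↔
      ∀ a ∈ Set.range u₀, TGen.starW a ((List.replicate q g).flatten) = a) := by
  obtain ⟨hper, hg⟩ :=
    TGen.periodic_and_map_range_eq_of_star_rec (TGen.letter_add_two u₀ s t) hgQ hghead
  have hword : TGen.hword u₀ s t (p * q) = (List.replicate q g).flatten := by
    rw [TGen.hword_eq_map_letter, ← List.map_range_mul_eq_flatten_replicate hper hg, hglen]
    congr 2
    ring
  have hseq : ∀ r, TGen.seq u₀ s t (2 * (p * q)) r =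
      TGen.starW (u₀ r) ((List.replicate q g).flatten) := fun r => by
    rw [TGen.seq_apply, ← TGen.hword_eq_map_letter, hword]
  refine ⟨hword, hseq, ?_⟩
  simp only [funext_iff, hseq, Set.forall_mem_range]

/-- Lemma tr46: if `g` is the element of `u₀(s)u₁(t)F_{T_n} ∩ Q_n`, of length `2p`, and
`k = pq`, then the alternating word `h` of length `2k` equals `g^q`, the vertex `u_{2k}`
satisfies `u_{2k}(r) = u₀(r) * g^q` for all `r`, and `u₀ = u_{2k}` iff `a * g^q = a` for all
`a` in the image of `u₀`. -/
theorem stmt_18 {n : ℕ} {I : Type*} [DecidableEq I]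
    (u₀ : I → TGen n) (hu : Function.Injective u₀) (s t : I) (hst : s ≠ t)
    (p : ℕ) (hp : p = 2 ∨ p = 3) (g : List (TGen n))
    (hgQ : g ∈ TGen.Qset n) (hglen : g.length = 2 * p)
    (hghead : ∃ rest : List (TGen n), g = u₀ s :: (TGen.seq u₀ s t 1) t :: rest)
    (q : ℕ) :
    TGen.hword u₀ s t (p * q) = (List.replicate q g).flatten ∧
    (∀ r : I, TGen.seq u₀ s t (2 * (p * q)) r =
      TGen.starW (u₀ r) ((List.replicate q g).flatten)) ∧
    (TGen.seq u₀ s t (2 * (p * q)) = u₀ ↔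
      ∀ a ∈ Set.range u₀, TGen.starW a ((List.replicate q g).flatten) = a) :=
  stmt_18_general u₀ s t p g hgQ hglen hghead q
end
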